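/- arXiv:2105.10149 — 4 statements merged into one kernel-verified Lean document; each statement's English description precedes it below -/
import Mathlib

section
/- Let n ≥ 2 and let p be a real number with 1 ≤ p < n, and set p* = np/(n−p). Then there exists a constant C > 0, depending only on p and n, such that for every continuously differentiable function u : ℝⁿ → ℝ with compact support, the L^{p*} norm of u on ℝⁿ (with Lebesgue measure) is at most C times the L^p norm of the gradient of u, i.e. (∫_{ℝⁿ} |u|^{p*} dx)^{1/p*} ≤ C (∫_{ℝⁿ} |Du|^p dx)^{1/p}, where |Du| denotes the Euclidean norm of the gradient (total derivative) of u. -/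
/-!
The inequality is Mathlib's `eLpNorm_le_eLpNorm_fderiv_of_eq_inner` (Loomis–Whitney along grid
lines for `p = 1`, applied to `|u| ^ γ` for `p > 1`). Reading it through Bochner integrals is
faithful because a continuous compactly supported function lies in every `Lᵖ`, so none of the
integrals takes its junk value.
-/

open MeasureTheory Module

theorem MeasureTheory.MemLp.toReal_eLpNorm_ofReal_eq {α E : Type*} [MeasurableSpace α]
    {μ : Measure α} [NormedAddCommGroup E] {f : α → E} {q : ℝ} (hq : 0 < q)
    (hf : MemLp f (ENNReal.ofReal q) μ) :
    (eLpNorm f (ENNReal.ofReal q) μ).toReal = (∫ a, ‖f a‖ ^ q ∂μ) ^ q⁻¹ := by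
  rw [hf.eLpNorm_eq_integral_rpow_norm (by simpa using hq) ENNReal.ofReal_ne_top,
    ENNReal.toReal_ofReal hq.le, ENNReal.toReal_ofReal (by positivity)]

section

variable {E F : Type*} [NormedAddCommGroup E] [NormedSpace ℝ E] [MeasurableSpace E]
  [BorelSpace E] [FiniteDimensional ℝ E] {μ : Measure E} [μ.IsAddHaarMeasure]
  [NormedAddCommGroup F] [InnerProductSpace ℝ F]

theorem integral_norm_rpow_le_integral_norm_fderiv_rpow {u : E → F} (hu : ContDiff ℝ 1 u)
    (h2u : HasCompactSupport u) {p : ℝ} (hp : 1 ≤ p) (hpn : p < finrank ℝ E) :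
    (∫ x, ‖u x‖ ^ (finrank ℝ E * p / (finrank ℝ E - p)) ∂μ) ^
        ((finrank ℝ E - p) / (finrank ℝ E * p)) ≤
      eLpNormLESNormFDerivOfEqInnerConst μ p * (∫ x, ‖fderiv ℝ u x‖ ^ p ∂μ) ^ (1 / p) := by
  have hp0 : 0 < p := zero_lt_one.trans_le hp
  have hn0 : (0 : ℝ) < finrank ℝ E := hp0.trans hpn
  have hq0 : 0 < finrank ℝ E * p / (finrank ℝ E - p) := div_pos (by positivity) (sub_pos.mpr hpn)
  have hGNS := eLpNorm_le_eLpNorm_fderiv_of_eq_inner μ hu h2u (p := p.toNNReal)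
    (p' := (finrank ℝ E * p / (finrank ℝ E - p)).toNNReal) (Real.one_le_toNNReal.mpr hp)
    (Nat.cast_pos.mp hn0)
    (by rw [Real.coe_toNNReal _ hq0.le, NNReal.coe_inv, Real.coe_toNNReal _ hp0.le]; field_simp)
  have hDu : MemLp (fderiv ℝ u) (ENNReal.ofReal p) μ :=
    (hu.continuous_fderiv one_ne_zero).memLp_of_hasCompactSupport (h2u.fderiv (𝕜 := ℝ))
  have hu_mem : MemLp u (ENNReal.ofReal (finrank ℝ E * p / (finrank ℝ E - p))) μ :=
    hu.continuous.memLp_of_hasCompactSupport h2u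
  rw [Real.coe_toNNReal _ hp0.le] at hGNS
  rw [← inv_div (finrank ℝ E * p : ℝ), one_div, ← hu_mem.toReal_eLpNorm_ofReal_eq hq0,
    ← hDu.toReal_eLpNorm_ofReal_eq hp0, ← ENNReal.coe_toReal, ← ENNReal.toReal_mul]
  exact ENNReal.toReal_mono (ENNReal.mul_ne_top ENNReal.coe_ne_top hDu.eLpNorm_ne_top) hGNS

end

theorem gagliardo_nirenberg_sobolev_general (n : ℕ) (p : ℝ)
    (hp1 : 1 ≤ p) (hpn : p < n) :
    ∃ C : ℝ, 0 < C ∧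
      ∀ u : EuclideanSpace ℝ (Fin n) → ℝ, ContDiff ℝ 1 u → HasCompactSupport u →
        (∫ x, |u x| ^ (n * p / (n - p))) ^ ((n - p) / (n * p)) ≤
          C * (∫ x, ‖fderiv ℝ u x‖ ^ p) ^ (1 / p) := by
  set C := eLpNormLESNormFDerivOfEqInnerConst (volume : Measure (EuclideanSpace ℝ (Fin n))) p
  refine ⟨C + 1, by positivity, fun u hu h2u => ?_⟩
  have hGNS := integral_norm_rpow_le_integral_norm_fderiv_rpow (μ := volume) hu h2u hp1
    (by rwa [finrank_euclideanSpace_fin])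
  simp only [finrank_euclideanSpace_fin, Real.norm_eq_abs] at hGNS
  exact hGNS.trans (mul_le_mul_of_nonneg_right (by linarith) (by positivity))

/-- **Gagliardo–Nirenberg–Sobolev inequality.** For `1 ≤ p < n` there is a constant
`C > 0`, depending only on `p` and `n`, such that for every `C¹` compactly supported
`u : ℝⁿ → ℝ` one has `‖u‖_{L^{p*}} ≤ C ‖Du‖_{L^p}` with `p* = np/(n−p)`. -/
theorem gagliardo_nirenberg_sobolev (n : ℕ) (hn : 2 ≤ n) (p : ℝ)
    (hp1 : 1 ≤ p) (hpn : p < n) :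
    ∃ C : ℝ, 0 < C ∧
      ∀ u : EuclideanSpace ℝ (Fin n) → ℝ, ContDiff ℝ 1 u → HasCompactSupport u →
        (∫ x, |u x| ^ (n * p / (n - p))) ^ ((n - p) / (n * p)) ≤
          C * (∫ x, ‖fderiv ℝ u x‖ ^ p) ^ (1 / p) :=
  gagliardo_nirenberg_sobolev_general n p hp1 hpn
end

section
/- Let n ≥ 2. There exists a constant C > 0, depending only on n, such that for every continuously differentiable function u : ℝⁿ → ℝ with compact support and every open ball B ⊂ ℝⁿ of positive radius, the mean oscillation of u over B is controlled by the L^n norm of the gradient of u on all of ℝⁿ: (1/|B|) ∫_B |u(x) − u_B| dx ≤ C (∫_{ℝⁿ} |Du|^n dy)^{1/n}, where u_B = (1/|B|) ∫_B u(x) dx denotes the average of u over B and |B| is the Lebesgue measure of B. -/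
open MeasureTheory

/-- The average `u_B = (1/|B|) ∫_B u` of `u` over the open ball `B = B(c,r)`. -/
noncomputable def ballAvg {n : ℕ} (u : EuclideanSpace ℝ (Fin n) → ℝ)
    (c : EuclideanSpace ℝ (Fin n)) (r : ℝ) : ℝ :=
  ((volume (Metric.ball c r)).toReal)⁻¹ * ∫ y in Metric.ball c r, u y

/-- The mean oscillation `(1/|B|) ∫_B |u − u_B|` of `u` over the ball `B = B(c,r)`. -/
noncomputable def meanOsc {n : ℕ} (u : EuclideanSpace ℝ (Fin n) → ℝ)
    (c : EuclideanSpace ℝ (Fin n)) (r : ℝ) : ℝ :=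
  ((volume (Metric.ball c r)).toReal)⁻¹ *
    ∫ x in Metric.ball c r, |u x - ballAvg u c r|

open Metric Set Module
open scoped ENNReal

/-! The mean oscillation of `u` over a ball `B` is at most the mean of `|u x - u y|` over pairs of
points of `B`. Writing `u x - u y` as the integral of `Du` along the segment from `y` to `x`, and
integrating first in the endpoint that carries weight at least `1/2` at the current point of the
segment (a homothety of ratio at least `1/2`, which distorts Lebesgue measure by at most `2ⁿ`),
gives the `L¹` Poincaré inequality `∫_B |u - u_B| ≤ 2ⁿ diam B ∫_B |Du|`. By Hölder,
`∫_B |Du| ≤ ‖Du‖_{Lⁿ} |B|^{1 - 1/n}`, and since `|B|^{1/n}` is proportional to the radius the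
resulting bound on the mean oscillation does not depend on the ball. -/

theorem enorm_sub_le_mul_lintegral_enorm_fderiv_lineMap {E F : Type*} [NormedAddCommGroup E]
    [NormedSpace ℝ E] [NormedAddCommGroup F] [NormedSpace ℝ F] [CompleteSpace F] {u : E → F}
    (hu : ContDiff ℝ 1 u) (x y : E) :
    ‖u x - u y‖ₑ ≤ ‖x - y‖ₑ * ∫⁻ t in Ioc (0 : ℝ) 1, ‖fderiv ℝ u (AffineMap.lineMap y x t)‖ₑ := by
  have hDu : Continuous fun t : ℝ => fderiv ℝ u (AffineMap.lineMap y x t) :=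
    (hu.continuous_fderiv one_ne_zero).comp (AffineMap.lineMap_continuous)
  have hftc : u x - u y = ∫ t in (0 : ℝ)..1, fderiv ℝ u (AffineMap.lineMap y x t) (x - y) := by
    rw [intervalIntegral.integral_eq_sub_of_hasDerivAt (f := fun t => u (AffineMap.lineMap y x t))
      (fun t _ => ((hu.differentiable one_ne_zero _).hasFDerivAt).comp_hasDerivAt t
        AffineMap.hasDerivAt_lineMap)
      ((hDu.clm_apply continuous_const).intervalIntegrable 0 1)]
    simp
  calc ‖u x - u y‖ₑ
      ≤ ∫⁻ t in Ioc (0 : ℝ) 1, ‖fderiv ℝ u (AffineMap.lineMap y x t) (x - y)‖ₑ := by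
        rw [hftc, intervalIntegral.integral_of_le zero_le_one]
        exact enorm_integral_le_lintegral_enorm _
    _ ≤ ∫⁻ t in Ioc (0 : ℝ) 1, ‖fderiv ℝ u (AffineMap.lineMap y x t)‖ₑ * ‖x - y‖ₑ :=
        lintegral_mono fun t => ContinuousLinearMap.le_opENorm _ _
    _ = ‖x - y‖ₑ * ∫⁻ t in Ioc (0 : ℝ) 1, ‖fderiv ℝ u (AffineMap.lineMap y x t)‖ₑ := by
        rw [lintegral_mul_const' _ _ enorm_ne_top, mul_comm]

theorem enorm_sub_setAverage_le {α F : Type*} [MeasurableSpace α] {μ : Measure α} {s : Set α}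
    [NormedAddCommGroup F] [NormedSpace ℝ F] [CompleteSpace F] {u : α → F}
    (hu : IntegrableOn u s μ) (hs₀ : μ s ≠ 0) (hs : μ s ≠ ∞) (x : α) :
    ‖u x - ⨍ y in s, u y ∂μ‖ₑ ≤ (μ s)⁻¹ * ∫⁻ y in s, ‖u x - u y‖ₑ ∂μ := by
  have hreal : 0 < μ.real s := ENNReal.toReal_pos hs₀ hs
  have hmean : u x - ⨍ y in s, u y ∂μ = (μ.real s)⁻¹ • ∫ y in s, u x - u y ∂μ := by
    rw [integral_sub (integrableOn_const (C := u x) hs) hu, setIntegral_const, smul_sub,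
      inv_smul_smul₀ hreal.ne', setAverage_eq]
  rw [hmean, enorm_smul, Real.enorm_of_nonneg (inv_nonneg.2 hreal.le),
    ENNReal.ofReal_inv_of_pos hreal, measureReal_def, ENNReal.ofReal_toReal hs]
  gcongr
  exact enorm_integral_le_lintegral_enorm _

theorem setLIntegral_enorm_le_eLpNorm_mul_rpow {α F : Type*} [MeasurableSpace α]
    {μ : Measure α} [NormedAddCommGroup F] {f : α → F} (hf : AEStronglyMeasurable f μ)
    {p : ℝ≥0∞} (hp : 1 ≤ p) (s : Set α) :
    ∫⁻ x in s, ‖f x‖ₑ ∂μ ≤ eLpNorm f p μ * μ s ^ (1 - p.toReal⁻¹) := by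
  calc ∫⁻ x in s, ‖f x‖ₑ ∂μ = eLpNorm f 1 (μ.restrict s) := eLpNorm_one_eq_lintegral_enorm.symm
    _ ≤ eLpNorm f p (μ.restrict s) * μ.restrict s univ ^ (1 / (1 : ℝ≥0∞).toReal - 1 / p.toReal) :=
        eLpNorm_le_eLpNorm_mul_rpow_measure_univ hp hf.restrict
    _ ≤ eLpNorm f p μ * μ s ^ (1 - p.toReal⁻¹) := by
        rw [Measure.restrict_apply_univ, ENNReal.toReal_one, div_one, one_div]
        gcongr
        exact Measure.restrict_le_self

section HaarMeasure

variable {E : Type*} [NormedAddCommGroup E] [NormedSpace ℝ E] [MeasurableSpace E] [BorelSpace E]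
  [FiniteDimensional ℝ E] (μ : Measure E) [μ.IsAddHaarMeasure]

theorem setLIntegral_comp_homothety_le {G : E → ℝ≥0∞} (hG : Measurable G) {s : Set E}
    (hs : MeasurableSet s) (a : E) {t : ℝ} (ht : 0 < t) (hmaps : MapsTo (fun x => a + t • x) s s) :
    ∫⁻ x in s, G (a + t • x) ∂μ ≤ (ENNReal.ofReal t ^ finrank ℝ E)⁻¹ * ∫⁻ x in s, G x ∂μ := by
  calc ∫⁻ x in s, G (a + t • x) ∂μ ≤ ∫⁻ x, s.indicator G (a + t • x) ∂μ :=
        (setLIntegral_mono' hs fun x hx => by rw [indicator_of_mem (hmaps hx)]).trans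
          (setLIntegral_le_lintegral _ _)
    _ = ∫⁻ x, s.indicator G (a + x) ∂Measure.map (t • ·) μ :=
        (lintegral_map ((hG.indicator hs).comp (measurable_const_add a))
          (measurable_const_smul t)).symm
    _ = (ENNReal.ofReal t ^ finrank ℝ E)⁻¹ * ∫⁻ x in s, G x ∂μ := by
        rw [Measure.map_addHaar_smul μ ht.ne', lintegral_smul_measure,
          lintegral_add_left_eq_self (s.indicator G), lintegral_indicator hs,
          smul_eq_mul, abs_inv, abs_of_pos (pow_pos ht _), ENNReal.ofReal_inv_of_pos (pow_pos ht _),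
          ENNReal.ofReal_pow ht.le]

theorem ofReal_mul_addHaar_ball_rpow_neg_inv_finrank [Nontrivial E] (c : E) {r : ℝ} (hr : 0 < r) :
    ENNReal.ofReal r * μ (ball c r) ^ (-(finrank ℝ E : ℝ)⁻¹) =
      μ (ball (0 : E) 1) ^ (-(finrank ℝ E : ℝ)⁻¹) := by
  have hd : (finrank ℝ E : ℝ) ≠ 0 := by exact_mod_cast finrank_pos.ne'
  rw [Measure.addHaar_ball μ c hr.le, ENNReal.ofReal_pow hr.le,
    ENNReal.mul_rpow_of_ne_zero (pow_ne_zero _ (ENNReal.ofReal_pos.2 hr).ne')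
      (measure_ball_pos μ 0 one_pos).ne', ← ENNReal.rpow_natCast, ← ENNReal.rpow_mul,
    mul_neg, mul_inv_cancel₀ hd, ENNReal.rpow_neg_one, ← mul_assoc,
    ENNReal.mul_inv_cancel (ENNReal.ofReal_pos.2 hr).ne' ENNReal.ofReal_ne_top, one_mul]

variable {μ} {s : Set E} {G : E → ℝ≥0∞}

theorem Convex.setLIntegral_comp_lineMap_le (hs : Convex ℝ s) (hsm : MeasurableSet s)
    (hG : Measurable G) {y : E} (hy : y ∈ s) {t : ℝ} (ht : 2⁻¹ ≤ t) (ht1 : t ≤ 1) :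
    ∫⁻ x in s, G (AffineMap.lineMap y x t) ∂μ ≤ 2 ^ finrank ℝ E * ∫⁻ x in s, G x ∂μ := by
  have ht0 : 0 < t := lt_of_lt_of_le (by norm_num) ht
  simp only [AffineMap.lineMap_apply_module]
  refine (setLIntegral_comp_homothety_le μ hG hsm _ ht0 fun x hx => ?_).trans ?_
  · simpa only [AffineMap.lineMap_apply_module] using hs.lineMap_mem hy hx ⟨ht0.le, ht1⟩
  · rw [ENNReal.inv_pow, ← ENNReal.ofReal_inv_of_pos ht0, ← ENNReal.ofReal_ofNat 2]
    gcongr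
    exact (inv_le_comm₀ ht0 two_pos).2 ht

theorem Convex.setLIntegral_setLIntegral_comp_lineMap_le (hs : Convex ℝ s) (hsm : MeasurableSet s)
    (hG : Measurable G) {t : ℝ} (ht0 : 0 ≤ t) (ht1 : t ≤ 1) :
    ∫⁻ x in s, ∫⁻ y in s, G (AffineMap.lineMap y x t) ∂μ ∂μ
      ≤ 2 ^ finrank ℝ E * μ s * ∫⁻ x in s, G x ∂μ := by
  rcases le_or_gt 2⁻¹ t with ht | ht
  · rw [lintegral_lintegral_swap (by
      simp only [AffineMap.lineMap_apply_module, Function.uncurry_def]; fun_prop)]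
    calc ∫⁻ y in s, ∫⁻ x in s, G (AffineMap.lineMap y x t) ∂μ ∂μ
        ≤ ∫⁻ _ in s, 2 ^ finrank ℝ E * ∫⁻ x in s, G x ∂μ ∂μ :=
          setLIntegral_mono' hsm fun y hy => hs.setLIntegral_comp_lineMap_le hsm hG hy ht ht1
      _ = _ := by rw [setLIntegral_const, mul_right_comm]
  · calc ∫⁻ x in s, ∫⁻ y in s, G (AffineMap.lineMap y x t) ∂μ ∂μ
        = ∫⁻ x in s, ∫⁻ y in s, G (AffineMap.lineMap x y (1 - t)) ∂μ ∂μ := by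
          simp only [AffineMap.lineMap_apply_one_sub]
      _ ≤ ∫⁻ _ in s, 2 ^ finrank ℝ E * ∫⁻ x in s, G x ∂μ ∂μ :=
          setLIntegral_mono' hsm fun x hx =>
            hs.setLIntegral_comp_lineMap_le hsm hG hx (by linarith) (by linarith)
      _ = _ := by rw [setLIntegral_const, mul_right_comm]

theorem Convex.setLIntegral_setLIntegral_lintegral_comp_lineMap_le (hs : Convex ℝ s)
    (hsm : MeasurableSet s) (hG : Measurable G) :
    ∫⁻ x in s, ∫⁻ y in s, (∫⁻ t in Ioc (0 : ℝ) 1, G (AffineMap.lineMap y x t)) ∂μ ∂μ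
      ≤ 2 ^ finrank ℝ E * μ s * ∫⁻ x in s, G x ∂μ := by
  calc ∫⁻ x in s, ∫⁻ y in s, (∫⁻ t in Ioc (0 : ℝ) 1, G (AffineMap.lineMap y x t)) ∂μ ∂μ
      = ∫⁻ t in Ioc (0 : ℝ) 1, ∫⁻ x in s, ∫⁻ y in s, G (AffineMap.lineMap y x t) ∂μ ∂μ := by
        have hmeas : Measurable fun q : (E × ℝ) × E => G (AffineMap.lineMap q.2 q.1.1 q.1.2) := by
          simp only [AffineMap.lineMap_apply_module]; fun_prop
        rw [← lintegral_lintegral_swap (f := fun x t => ∫⁻ y in s, G (AffineMap.lineMap y x t) ∂μ)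
          hmeas.lintegral_prod_right'.aemeasurable]
        refine setLIntegral_congr_fun hsm fun x _ => lintegral_lintegral_swap ?_
        exact (hmeas.comp
          ((measurable_const.prodMk measurable_snd).prodMk measurable_fst)).aemeasurable
    _ ≤ ∫⁻ _ in Ioc (0 : ℝ) 1, 2 ^ finrank ℝ E * μ s * ∫⁻ x in s, G x ∂μ :=
        setLIntegral_mono' measurableSet_Ioc fun t ht =>
          hs.setLIntegral_setLIntegral_comp_lineMap_le hsm hG ht.1.le ht.2
    _ = _ := by simp

theorem Convex.lintegral_enorm_sub_setAverage_le {F : Type*} [NormedAddCommGroup F]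
    [NormedSpace ℝ F] [CompleteSpace F] {u : E → F} (hs : Convex ℝ s) (hsm : MeasurableSet s)
    (hsb : Bornology.IsBounded s) (hu : ContDiff ℝ 1 u) :
    ∫⁻ x in s, ‖u x - ⨍ y in s, u y ∂μ‖ₑ ∂μ
      ≤ 2 ^ finrank ℝ E * ediam s * ∫⁻ x in s, ‖fderiv ℝ u x‖ₑ ∂μ := by
  rcases eq_or_ne (μ s) 0 with hs₀ | hs₀
  · simp [setLIntegral_measure_zero _ _ hs₀]
  have hs_top : μ s ≠ ∞ := hsb.measure_lt_top.ne
  have hint : IntegrableOn u s μ :=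
    (hu.continuous.continuousOn.integrableOn_compact hsb.isCompact_closure).mono_set subset_closure
  have hDu : Measurable fun x => ‖fderiv ℝ u x‖ₑ :=
    (hu.continuous_fderiv one_ne_zero).enorm.measurable
  calc ∫⁻ x in s, ‖u x - ⨍ y in s, u y ∂μ‖ₑ ∂μ
      ≤ ∫⁻ x in s, (μ s)⁻¹ * ∫⁻ y in s, ‖u x - u y‖ₑ ∂μ ∂μ :=
        lintegral_mono fun x => enorm_sub_setAverage_le hint hs₀ hs_top x
    _ ≤ ∫⁻ x in s, (μ s)⁻¹ * ∫⁻ y in s, ediam s *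
          (∫⁻ t in Ioc (0 : ℝ) 1, ‖fderiv ℝ u (AffineMap.lineMap y x t)‖ₑ) ∂μ ∂μ := by
        refine setLIntegral_mono' hsm fun x hx => ?_
        gcongr (μ s)⁻¹ * ?_
        refine setLIntegral_mono' hsm fun y hy => ?_
        refine (enorm_sub_le_mul_lintegral_enorm_fderiv_lineMap hu x y).trans ?_
        gcongr
        rw [← edist_eq_enorm_sub]
        exact edist_le_ediam_of_mem hx hy
    _ = (μ s)⁻¹ * ediam s * ∫⁻ x in s, ∫⁻ y in s,
          (∫⁻ t in Ioc (0 : ℝ) 1, ‖fderiv ℝ u (AffineMap.lineMap y x t)‖ₑ) ∂μ ∂μ := by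
        simp only [lintegral_const_mul' _ _ (isBounded_iff_ediam_ne_top.1 hsb),
          lintegral_const_mul' _ _ (ENNReal.inv_ne_top.2 hs₀), mul_assoc]
    _ ≤ (μ s)⁻¹ * ediam s * (2 ^ finrank ℝ E * μ s * ∫⁻ x in s, ‖fderiv ℝ u x‖ₑ ∂μ) := by
        gcongr
        exact hs.setLIntegral_setLIntegral_lintegral_comp_lineMap_le hsm hDu
    _ = 2 ^ finrank ℝ E * ediam s * ∫⁻ x in s, ‖fderiv ℝ u x‖ₑ ∂μ := by
        rw [show ∀ a b c d e : ℝ≥0∞, a * b * (c * d * e) = a * d * (c * b * e) by intros; ring,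
          ENNReal.inv_mul_cancel hs₀ hs_top, one_mul]

theorem setLAverage_enorm_sub_setAverage_ball_le [Nontrivial E] {F : Type*}
    [NormedAddCommGroup F] [NormedSpace ℝ F] [CompleteSpace F] {u : E → F} (hu : ContDiff ℝ 1 u)
    (c : E) {r : ℝ} (hr : 0 < r) :
    ⨍⁻ x in ball c r, ‖u x - ⨍ y in ball c r, u y ∂μ‖ₑ ∂μ ≤
      2 ^ (finrank ℝ E + 1) * μ (ball (0 : E) 1) ^ (-(finrank ℝ E : ℝ)⁻¹) *
        eLpNorm (fderiv ℝ u) (finrank ℝ E) μ := by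
  have hB₀ : μ (ball c r) ≠ 0 := (measure_ball_pos μ c hr).ne'
  have hB_top : μ (ball c r) ≠ ∞ := measure_ball_lt_top.ne
  have hdiam : ediam (ball c r) ≤ 2 * ENNReal.ofReal r := by
    rw [← eball_ofReal]
    exact ediam_eball_le
  have hholder := setLIntegral_enorm_le_eLpNorm_mul_rpow
    (hu.continuous_fderiv one_ne_zero).aestronglyMeasurable (μ := μ)
    (Nat.one_le_cast.2 finrank_pos : 1 ≤ (finrank ℝ E : ℝ≥0∞)) (ball c r)
  rw [ENNReal.toReal_natCast] at hholder
  calc ⨍⁻ x in ball c r, ‖u x - ⨍ y in ball c r, u y ∂μ‖ₑ ∂μ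
      = (μ (ball c r))⁻¹ * ∫⁻ x in ball c r, ‖u x - ⨍ y in ball c r, u y ∂μ‖ₑ ∂μ := by
        rw [setLAverage_eq, ENNReal.div_eq_inv_mul]
    _ ≤ (μ (ball c r))⁻¹ * (2 ^ finrank ℝ E * (2 * ENNReal.ofReal r) *
          (eLpNorm (fderiv ℝ u) (finrank ℝ E) μ *
            μ (ball c r) ^ (1 - (finrank ℝ E : ℝ)⁻¹))) := by
        gcongr
        exact ((convex_ball c r).lintegral_enorm_sub_setAverage_le measurableSet_ball
          isBounded_ball hu).trans (by gcongr)
    _ = 2 ^ (finrank ℝ E + 1) * (ENNReal.ofReal r * μ (ball c r) ^ (-(finrank ℝ E : ℝ)⁻¹)) *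
          eLpNorm (fderiv ℝ u) (finrank ℝ E) μ := by
        rw [sub_eq_add_neg, ENNReal.rpow_add _ _ hB₀ hB_top, ENNReal.rpow_one,
          show ∀ a b c d e : ℝ≥0∞,
            a⁻¹ * (b * (2 * c) * (d * (a * e))) = a⁻¹ * a * (b * 2 * (c * e) * d) by
              intros; ring, ENNReal.inv_mul_cancel hB₀ hB_top, one_mul, pow_succ]
    _ = 2 ^ (finrank ℝ E + 1) * μ (ball (0 : E) 1) ^ (-(finrank ℝ E : ℝ)⁻¹) *
          eLpNorm (fderiv ℝ u) (finrank ℝ E) μ := by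
        rw [ofReal_mul_addHaar_ball_rpow_neg_inv_finrank μ c hr]

end HaarMeasure

theorem ballAvg_eq_setAverage {n : ℕ} (u : EuclideanSpace ℝ (Fin n) → ℝ)
    (c : EuclideanSpace ℝ (Fin n)) (r : ℝ) : ballAvg u c r = ⨍ y in ball c r, u y := by
  rw [ballAvg, setAverage_eq, smul_eq_mul, measureReal_def]

theorem meanOsc_eq_toReal_setLAverage {n : ℕ} {u : EuclideanSpace ℝ (Fin n) → ℝ}
    (hu : Continuous u) (c : EuclideanSpace ℝ (Fin n)) (r : ℝ) :
    meanOsc u c r = (⨍⁻ x in ball c r, ‖u x - ⨍ y in ball c r, u y‖ₑ ∂volume).toReal := by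
  rw [meanOsc, ballAvg_eq_setAverage, setLAverage_eq, ENNReal.toReal_div, div_eq_inv_mul]
  simp only [← Real.norm_eq_abs]
  rw [integral_norm_eq_lintegral_enorm (f := fun x => u x - ⨍ y in ball c r, u y) (by fun_prop)]

/-- **John–Nirenberg (1961): `W^{1,n}(ℝⁿ) ⊆ BMO`.** There is a constant `C > 0`,
depending only on `n`, such that for every `C¹` compactly supported `u : ℝⁿ → ℝ` and
every open ball `B` of positive radius, the mean oscillation of `u` over `B` is at most
`C (∫_{ℝⁿ} |Du|^n)^{1/n}`. -/
theorem john_nirenberg_W1n_subset_BMO (n : ℕ) (hn : 2 ≤ n) :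
    ∃ C : ℝ, 0 < C ∧
      ∀ u : EuclideanSpace ℝ (Fin n) → ℝ, ContDiff ℝ 1 u → HasCompactSupport u →
        ∀ (c : EuclideanSpace ℝ (Fin n)) (r : ℝ), 0 < r →
          meanOsc u c r ≤ C * (∫ y, ‖fderiv ℝ u y‖ ^ (n : ℝ)) ^ (1 / (n : ℝ)) := by
  have : Nontrivial (EuclideanSpace ℝ (Fin n)) :=
    finrank_pos_iff.1 (by rw [finrank_euclideanSpace_fin]; omega)
  have hω₀ : volume (ball (0 : EuclideanSpace ℝ (Fin n)) 1) ≠ 0 :=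
    (measure_ball_pos volume _ one_pos).ne'
  have hω : 0 < (volume (ball (0 : EuclideanSpace ℝ (Fin n)) 1)).toReal :=
    ENNReal.toReal_pos hω₀ measure_ball_lt_top.ne
  refine ⟨2 ^ (n + 1) * (volume (ball (0 : EuclideanSpace ℝ (Fin n)) 1)).toReal ^ (-(n : ℝ)⁻¹),
    by positivity, fun u hu hsupp c r hr => ?_⟩
  have hLn : eLpNorm (fderiv ℝ u) n volume =
      ENNReal.ofReal ((∫ y, ‖fderiv ℝ u y‖ ^ (n : ℝ)) ^ (1 / (n : ℝ))) := by
    rw [((hu.continuous_fderiv one_ne_zero).memLp_of_hasCompactSupport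
      (hsupp.fderiv (𝕜 := ℝ))).eLpNorm_eq_integral_rpow_norm (Nat.cast_ne_zero.2 (by omega))
      (ENNReal.natCast_ne_top n), ENNReal.toReal_natCast, one_div]
  have hosc := setLAverage_enorm_sub_setAverage_ball_le (μ := volume) hu c hr
  rw [finrank_euclideanSpace_fin, hLn] at hosc
  rw [meanOsc_eq_toReal_setLAverage hu.continuous]
  refine (ENNReal.toReal_mono ?_ hosc).trans_eq ?_
  · exact ENNReal.mul_ne_top (ENNReal.mul_ne_top (by finiteness)
      (ENNReal.rpow_ne_top_of_ne_zero hω₀ measure_ball_lt_top.ne)) ENNReal.ofReal_ne_top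
  · rw [ENNReal.toReal_mul, ENNReal.toReal_mul, ← ENNReal.toReal_rpow, ENNReal.toReal_pow,
      ENNReal.toReal_ofNat, ENNReal.toReal_ofReal (by positivity)]
end

section
/- Let n ≥ 2. There is no constant C > 0 such that for every continuously differentiable function u : ℝⁿ → ℝ with compact support one has sup_{x ∈ ℝⁿ} |u(x)| ≤ C (∫_{ℝⁿ} |Du|^n dy)^{1/n}. Equivalently: for every C > 0 there exists a continuously differentiable compactly supported u : ℝⁿ → ℝ with sup_{x ∈ ℝⁿ} |u(x)| > C (∫_{ℝⁿ} |Du|^n dy)^{1/n}. -/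
/-!
Let `ψ` be a bump function equal to `1` near the origin, with `Dψ` supported in the annulus
`1 ≤ ‖x‖ ≤ 2`, and put `u_N(x) = ∑_{k<N} ψ(3ᵏ x)`. Then `u_N(0) = N`, while the gradients of
the summands live on pairwise disjoint annuli and the `n`-energy `∫ ‖Du‖ⁿ` is invariant under
the dilations `x ↦ 3ᵏ x` of `ℝⁿ`. Hence `∫ ‖Du_N‖ⁿ = N ∫ ‖Dψ‖ⁿ`, and the inequality would give
`N ≤ C (N ∫ ‖Dψ‖ⁿ)^{1/n}`, which fails for large `N` because `n > 1`.
-/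

open MeasureTheory Module Set Topology

theorem HasCompactSupport.finsetSum {α ι M : Type*} [TopologicalSpace α] [AddCommMonoid M]
    {s : Finset ι} {f : ι → α → M} (hf : ∀ i ∈ s, HasCompactSupport (f i)) :
    HasCompactSupport fun x => ∑ i ∈ s, f i x := by
  classical
  induction s using Finset.induction_on with
  | empty => simp only [Finset.sum_empty]; exact HasCompactSupport.zero
  | insert i s hi ih =>
    simp_rw [Finset.sum_insert hi]
    exact (hf i (Finset.mem_insert_self i s)).add
      (ih fun j hj => hf j (Finset.mem_insert_of_mem hj))

theorem norm_sum_pow_of_subsingleton_support {ι E : Type*} [NormedAddCommGroup E]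
    {s : Finset ι} {v : ι → E} (hv : ∀ i ∈ s, ∀ j ∈ s, v i ≠ 0 → v j ≠ 0 → i = j)
    {p : ℕ} (hp : p ≠ 0) :
    ‖∑ i ∈ s, v i‖ ^ p = ∑ i ∈ s, ‖v i‖ ^ p := by
  by_cases h : ∃ i ∈ s, v i ≠ 0
  · obtain ⟨i, hi, hvi⟩ := h
    have hzero : ∀ j ∈ s, j ≠ i → v j = 0 := fun j hj hji => by
      by_contra hvj
      exact hji (hv j hj i hi hvj hvi)
    rw [Finset.sum_eq_single_of_mem i hi hzero,
      Finset.sum_eq_single_of_mem i hi fun j hj hji => by simp [hzero j hj hji, hp]]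
  · push Not at h
    rw [Finset.sum_eq_zero h, norm_zero, zero_pow hp]
    exact (Finset.sum_eq_zero fun i hi => by rw [h i hi, norm_zero, zero_pow hp]).symm

section Energy

variable {E F : Type*} [NormedAddCommGroup E] [NormedSpace ℝ E] [MeasurableSpace E]
  [BorelSpace E] [NormedAddCommGroup F] [NormedSpace ℝ F]

theorem integrable_norm_fderiv_pow (μ : Measure E) [IsFiniteMeasureOnCompacts μ] {g : E → F}
    (hg : ContDiff ℝ 1 g) (hcs : HasCompactSupport g) {p : ℕ} (hp : p ≠ 0) :
    Integrable (fun x => ‖fderiv ℝ g x‖ ^ p) μ :=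
  ((hg.continuous_fderiv one_ne_zero).norm.pow p).integrable_of_hasCompactSupport
    ((hcs.fderiv ℝ).comp_left (g := fun L : E →L[ℝ] F => ‖L‖ ^ p) (by simp [hp]))

/-- The factor `|c|ⁿ` from the chain rule cancels the Jacobian `|c|⁻ⁿ` of the substitution. -/
theorem integral_norm_fderiv_comp_smul_pow [FiniteDimensional ℝ E] (μ : Measure E)
    [μ.IsAddHaarMeasure] (g : E → F) {c : ℝ} (hc : c ≠ 0) :
    ∫ x, ‖fderiv ℝ (fun x => g (c • x)) x‖ ^ finrank ℝ E ∂μ =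
      ∫ x, ‖fderiv ℝ g x‖ ^ finrank ℝ E ∂μ := by
  simp_rw [fderiv_comp_smul, norm_smul, mul_pow]
  rw [integral_const_mul, Measure.integral_comp_smul μ (fun y => ‖fderiv ℝ g y‖ ^ finrank ℝ E) c,
    smul_eq_mul, ← mul_assoc, Real.norm_eq_abs, ← abs_pow, ← abs_mul,
    mul_inv_cancel₀ (pow_ne_zero _ hc), abs_one, one_mul]

end Energy

theorem ContDiffBump.mem_annulus_of_fderiv_ne_zero {E : Type*} [NormedAddCommGroup E]
    [NormedSpace ℝ E] [HasContDiffBump E] {c x : E} (f : ContDiffBump c)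
    (hx : fderiv ℝ f x ≠ 0) : f.rIn ≤ dist x c ∧ dist x c ≤ f.rOut := by
  contrapose! hx
  rcases lt_or_ge (dist x c) f.rIn with hin | hout
  · have hone : (f : E → ℝ) =ᶠ[𝓝 x] fun _ => 1 := by
      filter_upwards [Metric.isOpen_ball.mem_nhds (Metric.mem_ball.2 hin)] with y hy
      exact f.one_of_mem_closedBall (Metric.ball_subset_closedBall hy)
    rw [hone.fderiv_eq, fderiv_const_apply]
  · have hzero : (f : E → ℝ) =ᶠ[𝓝 x] fun _ => 0 := by
      filter_upwards [(isOpen_lt continuous_const (continuous_id.dist continuous_const)).mem_nhds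
        (hx hout)] with y hy
      exact f.zero_of_le_dist (le_of_lt hy)
    rw [hzero.fderiv_eq, fderiv_const_apply]

/-- If `r₂ < a r₁`, the dilates `a⁻ᵏ • [r₁, r₂]` of an interval are pairwise disjoint. -/
theorem le_of_pow_mul_mem_Icc {r₁ r₂ a r : ℝ} (hr₁ : 0 < r₁) (ha : r₂ < a * r₁) {j k : ℕ}
    (hj : a ^ j * r ∈ Icc r₁ r₂) (hk : a ^ k * r ∈ Icc r₁ r₂) : k ≤ j := by
  by_contra! hjk
  have ha1 : 1 < a := by nlinarith [hj.1, hj.2]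
  have hr : 0 < r := pos_of_mul_pos_right (hr₁.trans_le hj.1) (by positivity)
  have hpow : a * a ^ j ≤ a ^ k := by
    rw [← pow_succ']
    exact pow_le_pow_right₀ ha1.le hjk
  nlinarith [hj.1, hk.2, mul_le_mul_of_nonneg_right hpow hr.le]

section BumpStack

variable {E : Type*} [NormedAddCommGroup E] [NormedSpace ℝ E] [HasContDiffBump E]

noncomputable def bumpStack (f : ContDiffBump (0 : E)) (a : ℝ) (N : ℕ) (x : E) : ℝ :=
  ∑ k ∈ Finset.range N, f (a ^ k • x)

variable (f : ContDiffBump (0 : E)) {a : ℝ}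

theorem bumpStack_zero (N : ℕ) : bumpStack f a N 0 = N := by
  simp [bumpStack, f.one_of_mem_closedBall (Metric.mem_closedBall_self f.rIn_pos.le)]

theorem contDiff_bumpStack {m : ℕ∞} (N : ℕ) : ContDiff ℝ m (bumpStack f a N) :=
  ContDiff.sum fun _ _ => f.contDiff.comp (contDiff_const_smul _)

theorem hasCompactSupport_bumpStack [FiniteDimensional ℝ E] (ha : a ≠ 0) (N : ℕ) :
    HasCompactSupport (bumpStack f a N) :=
  HasCompactSupport.finsetSum fun k _ => f.hasCompactSupport.comp_smul (pow_ne_zero k ha)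

theorem eq_of_fderiv_bump_comp_smul_ne_zero (hfa : f.rOut < a * f.rIn) {x : E} {j k : ℕ}
    (hj : fderiv ℝ (fun y => f (a ^ j • y)) x ≠ 0)
    (hk : fderiv ℝ (fun y => f (a ^ k • y)) x ≠ 0) : j = k := by
  have ha : 0 < a := by nlinarith [f.rIn_pos, f.rIn_lt_rOut]
  have hmem : ∀ i, fderiv ℝ (fun y => f (a ^ i • y)) x ≠ 0 → a ^ i * ‖x‖ ∈ Icc f.rIn f.rOut := by
    intro i hi
    rw [fderiv_comp_smul, smul_ne_zero_iff] at hi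
    have := f.mem_annulus_of_fderiv_ne_zero hi.2
    rwa [dist_zero_right, norm_smul, norm_pow, Real.norm_of_nonneg ha.le] at this
  exact le_antisymm (le_of_pow_mul_mem_Icc f.rIn_pos hfa (hmem k hk) (hmem j hj))
    (le_of_pow_mul_mem_Icc f.rIn_pos hfa (hmem j hj) (hmem k hk))

theorem integral_norm_fderiv_bumpStack_pow [Nontrivial E] [FiniteDimensional ℝ E]
    [MeasurableSpace E] [BorelSpace E] (μ : Measure E) [μ.IsAddHaarMeasure]
    (hfa : f.rOut < a * f.rIn) (N : ℕ) :
    ∫ x, ‖fderiv ℝ (bumpStack f a N) x‖ ^ finrank ℝ E ∂μ =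
      N * ∫ x, ‖fderiv ℝ f x‖ ^ finrank ℝ E ∂μ := by
  have ha : a ≠ 0 := by rintro rfl; linarith [f.rIn_pos.trans f.rIn_lt_rOut, hfa]
  have hd : finrank ℝ E ≠ 0 := finrank_pos.ne'
  have hbump : ∀ k : ℕ, ContDiff ℝ 1 fun y : E => f (a ^ k • y) :=
    fun k => f.contDiff.comp (contDiff_const_smul _)
  have hpointwise : ∀ x, ‖fderiv ℝ (bumpStack f a N) x‖ ^ finrank ℝ E =
      ∑ k ∈ Finset.range N, ‖fderiv ℝ (fun y => f (a ^ k • y)) x‖ ^ finrank ℝ E := fun x => by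
    unfold bumpStack
    rw [fderiv_fun_sum fun k _ => (hbump k).differentiable one_ne_zero x]
    exact norm_sum_pow_of_subsingleton_support
      (fun j _ k _ => eq_of_fderiv_bump_comp_smul_ne_zero f hfa) hd
  simp_rw [hpointwise]
  rw [integral_finsetSum _ fun k _ => integrable_norm_fderiv_pow μ (hbump k)
    (f.hasCompactSupport.comp_smul (pow_ne_zero k ha)) hd]
  simp_rw [integral_norm_fderiv_comp_smul_pow μ f (pow_ne_zero _ ha)]
  rw [Finset.sum_const, Finset.card_range, nsmul_eq_mul]

end BumpStack

theorem exists_nat_mul_rpow_one_div_lt_self {n : ℕ} (hn : 1 < n) {C I : ℝ} (hC : 0 ≤ C)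
    (hI : 0 ≤ I) : ∃ N : ℕ, C * ((N : ℝ) * I) ^ (1 / (n : ℝ)) < N := by
  obtain ⟨N, hN⟩ := exists_nat_gt (C ^ n * I)
  refine ⟨N, lt_of_not_ge fun hle => ?_⟩
  have hN1 : (1 : ℝ) ≤ N :=
    Nat.one_le_cast.2 (Nat.cast_pos.1 ((by positivity : 0 ≤ C ^ n * I).trans_lt hN))
  have hpow : (N : ℝ) ^ n ≤ C ^ n * (N * I) := by
    calc (N : ℝ) ^ n ≤ (C * ((N : ℝ) * I) ^ (1 / (n : ℝ))) ^ n :=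
          pow_le_pow_left₀ (by positivity) hle n
      _ = C ^ n * (N * I) := by
        rw [mul_pow, one_div, Real.rpow_inv_natCast_pow (by positivity) (by omega)]
  nlinarith [pow_le_pow_right₀ hN1 hn]

/-- **Failure of the critical Sobolev embedding `W^{1,n}(ℝⁿ) ↪ L^∞(ℝⁿ)`.**
There is no constant `C > 0` such that every `C¹` compactly supported `u : ℝⁿ → ℝ`
satisfies `sup_x |u(x)| ≤ C (∫_{ℝⁿ} |Du|^n)^{1/n}` (the sup bound being expressed as
the pointwise bound `∀ x, |u x| ≤ …`). -/
theorem no_critical_sobolev_embedding_into_Linfty (n : ℕ) (hn : 2 ≤ n) :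
    ¬ ∃ C : ℝ, 0 < C ∧
      ∀ u : EuclideanSpace ℝ (Fin n) → ℝ, ContDiff ℝ 1 u → HasCompactSupport u →
        ∀ x : EuclideanSpace ℝ (Fin n),
          |u x| ≤ C * (∫ y, ‖fderiv ℝ u y‖ ^ (n : ℝ)) ^ (1 / (n : ℝ)) := by
  rintro ⟨C, hC, hsobolev⟩
  have : Nonempty (Fin n) := ⟨⟨0, by omega⟩⟩
  let ψ : ContDiffBump (0 : EuclideanSpace ℝ (Fin n)) := ⟨1, 2, one_pos, one_lt_two⟩
  have hψ : ψ.rOut < 3 * ψ.rIn := by norm_num [ψ]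
  obtain ⟨N, hN⟩ := exists_nat_mul_rpow_one_div_lt_self (by omega : 1 < n) hC.le
    (integral_nonneg fun x => by positivity : 0 ≤ ∫ x, ‖fderiv ℝ ψ x‖ ^ n)
  have henergy := integral_norm_fderiv_bumpStack_pow ψ volume hψ N
  rw [finrank_euclideanSpace_fin] at henergy
  have hbound := hsobolev (bumpStack ψ 3 N) (contDiff_bumpStack ψ N)
    (hasCompactSupport_bumpStack ψ three_ne_zero N) 0
  simp_rw [Real.rpow_natCast, henergy, bumpStack_zero, Nat.abs_cast] at hbound
  exact hbound.not_gt hN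
end

section
/- Let n ≥ 2, let 1 ≤ p < n and 1 ≤ r < ∞, let θ ∈ [0,1], and define q by 1/q = θ(1/p − 1/n) + (1 − θ)/r, assuming q < ∞. Then there exists a constant C > 0, depending only on n, p, r and θ, such that for every continuously differentiable compactly supported u : ℝⁿ → ℝ, ‖u‖_{L^q(ℝⁿ)} ≤ C · ‖Du‖_{L^p(ℝⁿ)}^θ · ‖u‖_{L^r(ℝⁿ)}^{1−θ}, where ‖Du‖_{L^p} = (∫_{ℝⁿ} |Du|^p dx)^{1/p} and |Du| denotes the Euclidean/operator norm of the derivative of u. -/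
/-!
Write `1/s = 1/p - 1/n`. The Gagliardo–Nirenberg–Sobolev inequality bounds `‖u‖_s` by a
constant times `‖Du‖_p`. Since `1/q = θ/s + (1-θ)/r`, Hölder's inequality applied to
`|u| = |u|^θ · |u|^(1-θ)` with exponents `s/θ` and `r/(1-θ)` gives the log-convexity estimate
`‖u‖_q ≤ ‖u‖_s^θ ‖u‖_r^(1-θ)`, and the theorem follows by combining the two.
-/

open MeasureTheory Module
open scoped ENNReal NNReal

theorem ENNReal.inv_ofReal_eq_of_inv_eq {q s r θ : ℝ} (hq : 0 < q) (hs : 0 < s) (hr : 0 < r)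
    (hθ0 : 0 ≤ θ) (hθ1 : θ ≤ 1) (h : q⁻¹ = θ * s⁻¹ + (1 - θ) * r⁻¹) :
    (ENNReal.ofReal q)⁻¹ =
      ENNReal.ofReal θ * (ENNReal.ofReal s)⁻¹ + ENNReal.ofReal (1 - θ) * (ENNReal.ofReal r)⁻¹ := by
  rw [← ENNReal.ofReal_inv_of_pos hq, ← ENNReal.ofReal_inv_of_pos hs,
    ← ENNReal.ofReal_inv_of_pos hr, ← ENNReal.ofReal_mul hθ0, ← ENNReal.ofReal_mul (by linarith),
    ← ENNReal.ofReal_add (by positivity) (mul_nonneg (by linarith) (by positivity)), h]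

section LpSeminorm

variable {α E : Type*} [MeasurableSpace α] {μ : Measure α} [NormedAddCommGroup E]

theorem eLpNorm_le_eLpNorm_rpow_mul_eLpNorm_rpow {f : α → E} (hf : AEStronglyMeasurable f μ)
    {p q r : ℝ≥0∞} {θ : ℝ} (hθ0 : 0 ≤ θ) (hθ1 : θ ≤ 1)
    (hq : q⁻¹ = ENNReal.ofReal θ * p⁻¹ + ENNReal.ofReal (1 - θ) * r⁻¹) :
    eLpNorm f q μ ≤ eLpNorm f p μ ^ θ * eLpNorm f r μ ^ (1 - θ) := by
  rcases hθ0.eq_or_lt with rfl | hθ0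
  · simp_all
  rcases hθ1.eq_or_lt with rfl | hθ1
  · simp_all
  have hθ' : 0 < 1 - θ := sub_pos.2 hθ1
  have : ENNReal.HolderTriple (p / ENNReal.ofReal θ) (r / ENNReal.ofReal (1 - θ)) q :=
    ⟨by
      rw [ENNReal.inv_div (.inl ENNReal.ofReal_ne_top) (.inl (by simpa using hθ0)),
        ENNReal.inv_div (.inl ENNReal.ofReal_ne_top) (.inl (by simpa using hθ')), hq,
        div_eq_mul_inv, div_eq_mul_inv]⟩
  calc eLpNorm f q μ = eLpNorm (fun x ↦ ‖f x‖ ^ θ * ‖f x‖ ^ (1 - θ)) q μ := by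
        refine eLpNorm_congr_norm_ae (.of_forall fun x ↦ ?_)
        rw [norm_mul, Real.norm_of_nonneg (by positivity), Real.norm_of_nonneg (by positivity),
          ← Real.rpow_add' (norm_nonneg _) (by simp), add_sub_cancel, Real.rpow_one]
    _ ≤ 1 * eLpNorm (fun x ↦ ‖f x‖ ^ θ) (p / ENNReal.ofReal θ) μ *
          eLpNorm (fun x ↦ ‖f x‖ ^ (1 - θ)) (r / ENNReal.ofReal (1 - θ)) μ := by
        exact_mod_cast eLpNorm_le_eLpNorm_mul_eLpNorm'_of_norm
          (hf.norm.aemeasurable.pow_const _).aestronglyMeasurable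
          (hf.norm.aemeasurable.pow_const _).aestronglyMeasurable (· * ·) 1
          (.of_forall fun x ↦ by simp [norm_mul])
    _ = eLpNorm f p μ ^ θ * eLpNorm f r μ ^ (1 - θ) := by
        rw [eLpNorm_norm_rpow _ hθ0, eLpNorm_norm_rpow _ hθ', one_mul,
          ENNReal.div_mul_cancel (by simpa using hθ0) ENNReal.ofReal_ne_top,
          ENNReal.div_mul_cancel (by simpa using hθ') ENNReal.ofReal_ne_top]

theorem MeasureTheory.MemLp.toReal_eLpNorm_ofReal {f : α → E} {e : ℝ} (he : 0 < e)
    (hf : MemLp f (ENNReal.ofReal e) μ) :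
    (eLpNorm f (ENNReal.ofReal e) μ).toReal = (∫ x, ‖f x‖ ^ e ∂μ) ^ (1 / e) := by
  rw [hf.eLpNorm_eq_integral_rpow_norm (by simpa using he) ENNReal.ofReal_ne_top,
    ENNReal.toReal_ofReal (by positivity), ENNReal.toReal_ofReal he.le, one_div]

end LpSeminorm

section GagliardoNirenberg

variable {E F : Type*} [NormedAddCommGroup E] [NormedSpace ℝ E] [MeasurableSpace E] [BorelSpace E]
  [FiniteDimensional ℝ E] (μ : Measure E) [μ.IsAddHaarMeasure]
  [NormedAddCommGroup F] [NormedSpace ℝ F] [FiniteDimensional ℝ F]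

theorem eLpNorm_le_eLpNorm_fderiv_rpow_mul_eLpNorm_rpow {u : E → F} (hu : ContDiff ℝ 1 u)
    (h2u : HasCompactSupport u) {p s : ℝ≥0} (hp : 1 ≤ p) (hn : 0 < finrank ℝ E)
    (hs : (s : ℝ)⁻¹ = p⁻¹ - (finrank ℝ E : ℝ)⁻¹) {q r : ℝ≥0∞} {θ : ℝ} (hθ0 : 0 ≤ θ)
    (hθ1 : θ ≤ 1) (hq : q⁻¹ = ENNReal.ofReal θ * (s : ℝ≥0∞)⁻¹ + ENNReal.ofReal (1 - θ) * r⁻¹) :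
    eLpNorm u q μ ≤ (SNormLESNormFDerivOfEqConst F μ p : ℝ≥0∞) ^ θ *
      eLpNorm (fderiv ℝ u) p μ ^ θ * eLpNorm u r μ ^ (1 - θ) := by
  calc eLpNorm u q μ ≤ eLpNorm u s μ ^ θ * eLpNorm u r μ ^ (1 - θ) :=
        eLpNorm_le_eLpNorm_rpow_mul_eLpNorm_rpow hu.continuous.aestronglyMeasurable hθ0 hθ1 hq
    _ ≤ (SNormLESNormFDerivOfEqConst F μ p * eLpNorm (fderiv ℝ u) p μ) ^ θ *
          eLpNorm u r μ ^ (1 - θ) := by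
        gcongr
        exact eLpNorm_le_eLpNorm_fderiv_of_eq μ hu h2u hp hn hs
    _ = _ := by rw [ENNReal.mul_rpow_of_nonneg _ _ hθ0]

end GagliardoNirenberg

/-- **Gagliardo–Nirenberg interpolation inequality.** Let `1 ≤ p < n`, `1 ≤ r < ∞`,
`θ ∈ [0,1]`, and let `q` satisfy `1/q = θ(1/p − 1/n) + (1−θ)/r` with `q < ∞`. Then
there is `C > 0`, depending only on `n, p, r, θ`, such that every `C¹` compactly
supported `u : ℝⁿ → ℝ` satisfies
`‖u‖_{L^q} ≤ C ‖Du‖_{L^p}^θ ‖u‖_{L^r}^{1−θ}`. -/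
theorem gagliardo_nirenberg_interpolation (n : ℕ) (hn : 2 ≤ n)
    (p r θ q : ℝ) (hp1 : 1 ≤ p) (hpn : p < n) (hr : 1 ≤ r)
    (hθ0 : 0 ≤ θ) (hθ1 : θ ≤ 1)
    (hq : 1 / q = θ * (1 / p - 1 / n) + (1 - θ) / r) (hqfin : 0 < q) :
    ∃ C : ℝ, 0 < C ∧
      ∀ u : EuclideanSpace ℝ (Fin n) → ℝ, ContDiff ℝ 1 u → HasCompactSupport u →
        (∫ x, |u x| ^ q) ^ (1 / q) ≤
          C * ((∫ x, ‖fderiv ℝ u x‖ ^ p) ^ (1 / p)) ^ θ *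
            ((∫ x, |u x| ^ r) ^ (1 / r)) ^ (1 - θ) := by
  have hp0 : 0 < p := by linarith
  have hr0 : 0 < r := by linarith
  set s := (1 / p - 1 / n)⁻¹
  have hs0 : 0 < s := inv_pos.2 (sub_pos.2 (one_div_lt_one_div_of_lt hp0 hpn))
  have hqsr : q⁻¹ = θ * s⁻¹ + (1 - θ) * r⁻¹ := by
    rw [inv_inv, ← one_div, hq]
    ring
  set C₀ := SNormLESNormFDerivOfEqConst ℝ (volume : Measure (EuclideanSpace ℝ (Fin n))) p.toNNReal
  refine ⟨((C₀ + 1 : ℝ≥0) : ℝ) ^ θ, by positivity, fun u hu h2u ↦ ?_⟩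
  -- `ENNReal.ofReal x` is by definition the coercion of `x.toNNReal`.
  have hGN := eLpNorm_le_eLpNorm_fderiv_rpow_mul_eLpNorm_rpow volume hu h2u
    (p := p.toNNReal) (s := s.toNNReal) (by simpa using hp1) (by simp; omega)
    (by rw [NNReal.coe_inv, Real.coe_toNNReal _ hs0.le, Real.coe_toNNReal _ hp0.le,
      finrank_euclideanSpace_fin, inv_inv, one_div, one_div])
    hθ0 hθ1 (ENNReal.inv_ofReal_eq_of_inv_eq hqfin hs0 hr0 hθ0 hθ1 hqsr)
  have memq : MemLp u (.ofReal q) volume := hu.continuous.memLp_of_hasCompactSupport h2u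
  have memr : MemLp u (.ofReal r) volume := hu.continuous.memLp_of_hasCompactSupport h2u
  have memDu : MemLp (fderiv ℝ u) (.ofReal p) volume :=
    (hu.continuous_fderiv one_ne_zero).memLp_of_hasCompactSupport (h2u.fderiv (𝕜 := ℝ))
  have hDu_fin := memDu.eLpNorm_ne_top
  have hr_fin := memr.eLpNorm_ne_top
  calc (∫ x, |u x| ^ q) ^ (1 / q) = (eLpNorm u (.ofReal q) volume).toReal := by
        simp only [memq.toReal_eLpNorm_ofReal hqfin, Real.norm_eq_abs]
    _ ≤ ((C₀ + 1 : ℝ≥0) ^ θ * eLpNorm (fderiv ℝ u) (.ofReal p) volume ^ θ *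
          eLpNorm u (.ofReal r) volume ^ (1 - θ) : ℝ≥0∞).toReal := by
        refine ENNReal.toReal_mono (by finiteness) (hGN.trans ?_)
        gcongr
        exacts [le_self_add, le_rfl]
    _ = _ := by
        simp only [ENNReal.toReal_mul, ← ENNReal.toReal_rpow, memDu.toReal_eLpNorm_ofReal hp0,
          memr.toReal_eLpNorm_ofReal hr0, Real.norm_eq_abs, ENNReal.coe_toReal]
end
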